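/- arXiv:1810.00032 — 5 statements merged into one kernel-verified Lean document; each statement's English description precedes it below -/
import Mathlib

section
/- Let L be a bounded lattice with a unary operation ' such that x ∨ x' = 1 for all x, x ≤ y implies y' ≤ x' for all x, y, (x')' = x for all x, and x ≤ y implies y = x ∨ (y ∧ x') for all x, y (i.e., L is an orthomodular lattice). Define x ⊙ y := (x ∨ y') ∧ y and x → y := (y ∧ x) ∨ x'. Then for all x, y, z in L: x ⊙ y ≤ z if and only if x ≤ y → z (left adjointness). -/
/-! The complement `c` is an antitone involution, hence a lattice anti-automorphism, so the
orthomodular law `a ≤ b → b = a ⊔ (b ⊓ c a)` can be transported to its dual form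
`a ≤ b → (a ⊔ c b) ⊓ b = a`. The primal law, applied to `c y ≤ x ⊔ c y`, shows that the Sasaki
projection `(x ⊔ c y) ⊓ y` together with `c y` recovers `x ⊔ c y`; this gives the forward
implication. The dual law says the projection fixes every `a ≤ y`, in particular `a = z ⊓ y`,
which gives the converse by monotonicity. -/

section Orthomodular

variable {L : Type*} [Lattice L] {c : L → L}

theorem Antitone.map_sup_of_involutive (hc : Antitone c) (hcc : Function.Involutive c)
    (a b : L) : c (a ⊔ b) = c a ⊓ c b := by
  refine le_antisymm (le_inf (hc le_sup_left) (hc le_sup_right)) ?_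
  have hle : a ⊔ b ≤ c (c a ⊓ c b) := by
    refine sup_le ?_ ?_
    · simpa only [hcc a] using hc (inf_le_left : c a ⊓ c b ≤ c a)
    · simpa only [hcc b] using hc (inf_le_right : c a ⊓ c b ≤ c b)
  simpa only [hcc _] using hc hle

theorem le_compl_sup_sasaki (hcc : Function.Involutive c)
    (hom : ∀ a b : L, a ≤ b → b = a ⊔ (b ⊓ c a)) (x y : L) :
    x ≤ c y ⊔ (x ⊔ c y) ⊓ y := by
  have h := hom (c y) (x ⊔ c y) le_sup_right
  rw [hcc y] at h
  exact h ▸ le_sup_left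

theorem sup_compl_inf_eq_of_le (hc : Antitone c) (hcc : Function.Involutive c)
    (hom : ∀ a b : L, a ≤ b → b = a ⊔ (b ⊓ c a)) {a b : L} (hab : a ≤ b) :
    (a ⊔ c b) ⊓ b = a := by
  have h := congrArg c (hom (c b) (c a) (hc hab))
  rw [← hc.map_sup_of_involutive hcc a (c b), hc.map_sup_of_involutive hcc] at h
  simpa only [hcc _, inf_comm] using h.symm

end Orthomodular

theorem stmt_0_general {L : Type*} [Lattice L] (c : L → L)
    (h2 : ∀ x y : L, x ≤ y → c y ≤ c x)
    (h3 : ∀ x : L, c (c x) = x)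
    (h4 : ∀ x y : L, x ≤ y → y = x ⊔ (y ⊓ c x)) :
    ∀ x y z : L, (x ⊔ c y) ⊓ y ≤ z ↔ x ≤ (z ⊓ y) ⊔ c y := by
  have hc : Antitone c := fun x y hxy => h2 x y hxy
  intro x y z
  constructor
  · intro h
    calc x ≤ c y ⊔ (x ⊔ c y) ⊓ y := le_compl_sup_sasaki h3 h4 x y
      _ ≤ (z ⊓ y) ⊔ c y := sup_le le_sup_right (le_sup_of_le_left (le_inf h inf_le_right))
  · intro h
    calc (x ⊔ c y) ⊓ y ≤ ((z ⊓ y) ⊔ c y) ⊓ y :=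
          inf_le_inf_right y (sup_le h le_sup_right)
      _ = z ⊓ y := sup_compl_inf_eq_of_le hc h3 h4 inf_le_right
      _ ≤ z := inf_le_left

/-- In an orthomodular lattice with Sasaki operations
`x ⊙ y := (x ⊔ c y) ⊓ y` and `x → y := (y ⊓ x) ⊔ c x`, left adjointness holds. -/
theorem stmt_0 {L : Type*} [Lattice L] [BoundedOrder L] (c : L → L)
    (h1 : ∀ x : L, x ⊔ c x = ⊤)
    (h2 : ∀ x y : L, x ≤ y → c y ≤ c x)
    (h3 : ∀ x : L, c (c x) = x)
    (h4 : ∀ x y : L, x ≤ y → y = x ⊔ (y ⊓ c x)) :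
    ∀ x y z : L, (x ⊔ c y) ⊓ y ≤ z ↔ x ≤ (z ⊓ y) ⊔ c y :=
  stmt_0_general c h2 h3 h4
end

section
/- Let L be a bounded lattice with a unary operation ' such that x ∨ x' = 1 for all x, x ≤ y implies y' ≤ x' for all x, y, (x')' = x for all x, and x ≤ y implies y = x ∨ (y ∧ x') for all x, y (i.e., L is an orthomodular lattice). Define x ⊙ y := (x ∨ y') ∧ y and x → y := (y ∧ x) ∨ x'. Then for all x, y in L: (x → y) ⊙ x = x ∧ y (divisibility). -/
/-!
For `a ≤ x` the Sasaki projection `(a ⊔ x') ⊓ x` of `a` onto `x` is `a` itself: by De Morgan its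
complement is `x' ⊔ (a' ⊓ x)`, which the orthomodular law applied to `x' ≤ a'` identifies with `a'`.
Divisibility is the case `a = y ⊓ x`, since `(x → y) ⊔ x' = (y ⊓ x) ⊔ x'`.
-/

open Function

section OrthoInvolution

variable {L : Type*} [Lattice L] {c : L → L}

theorem map_inf_of_antitone_of_involutive (hc : Antitone c) (hinv : Involutive c) (u v : L) :
    c (u ⊓ v) = c u ⊔ c v := by
  refine le_antisymm ?_ (sup_le (hc inf_le_left) (hc inf_le_right))
  have hle : c (c u ⊔ c v) ≤ u ⊓ v := by
    refine le_inf ?_ ?_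
    · simpa only [hinv u] using hc (le_sup_left : c u ≤ c u ⊔ c v)
    · simpa only [hinv v] using hc (le_sup_right : c v ≤ c u ⊔ c v)
  simpa only [hinv (c u ⊔ c v)] using hc hle

theorem map_sup_of_antitone_of_involutive (hc : Antitone c) (hinv : Involutive c) (u v : L) :
    c (u ⊔ v) = c u ⊓ c v := by
  apply hinv.injective
  rw [map_inf_of_antitone_of_involutive hc hinv, hinv, hinv, hinv]

theorem sup_map_inf_eq_of_le_of_orthomodular (hc : Antitone c) (hinv : Involutive c)
    (hom : ∀ x y : L, x ≤ y → y = x ⊔ (y ⊓ c x)) {a x : L} (hax : a ≤ x) :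
    (a ⊔ c x) ⊓ x = a := by
  have hca : c a = c x ⊔ (c a ⊓ x) := by simpa only [hinv x] using hom (c x) (c a) (hc hax)
  apply hinv.injective
  rw [map_inf_of_antitone_of_involutive hc hinv, map_sup_of_antitone_of_involutive hc hinv,
    hinv, sup_comm, ← hca]

end OrthoInvolution

theorem stmt_2_general {L : Type*} [Lattice L] (c : L → L)
    (h2 : ∀ x y : L, x ≤ y → c y ≤ c x)
    (h3 : ∀ x : L, c (c x) = x)
    (h4 : ∀ x y : L, x ≤ y → y = x ⊔ (y ⊓ c x)) :
    ∀ x y : L, (((y ⊓ x) ⊔ c x) ⊔ c x) ⊓ x = x ⊓ y := by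
  intro x y
  rw [sup_assoc, sup_idem, inf_comm x y]
  exact sup_map_inf_eq_of_le_of_orthomodular (fun u v huv => h2 u v huv) h3 h4 inf_le_right

/-- In an orthomodular lattice with Sasaki operations
`x ⊙ y := (x ⊔ c y) ⊓ y` and `x → y := (y ⊓ x) ⊔ c x`, divisibility
`(x → y) ⊙ x = x ⊓ y` holds. -/
theorem stmt_2 {L : Type*} [Lattice L] [BoundedOrder L] (c : L → L)
    (h1 : ∀ x : L, x ⊔ c x = ⊤)
    (h2 : ∀ x y : L, x ≤ y → c y ≤ c x)
    (h3 : ∀ x : L, c (c x) = x)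
    (h4 : ∀ x y : L, x ≤ y → y = x ⊔ (y ⊓ c x)) :
    ∀ x y : L, (((y ⊓ x) ⊔ c x) ⊔ c x) ⊓ x = x ⊓ y :=
  stmt_2_general c h2 h3 h4
end

section
/- Let A be a bounded lattice with binary operations ⊙ and → such that for all x, y, z in A: x ⊙ 1 = x, 1 ⊙ x = x, and x ⊙ y ≤ z if and only if x ≤ y → z (i.e., A is a left residuated l-groupoid). Define x' := x → 0, and assume that for all x, y in A: x ≤ y implies y' ≤ x' (antitony), (x')' = x (double negation law), x ⊙ y = (x ∨ y') ∧ y, and x ⊙ (x ∨ y) = x. Then for all a, b in A with a ≤ b: b = a ∨ (b ∧ a') (the orthomodular law). -/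
/-! The orthocomplement `x' = x → 0` is an antitone involution, so it satisfies both
De Morgan laws. For `a ≤ b`, the absorption law `b' ⊙ (b' ∨ a') = b'`, unfolded by the
Sasaki formula for `⊙`, reads `(b' ∨ a) ∧ a' = b'`; complementing both sides gives
`b = (b ∧ a') ∨ a`. -/

namespace AntitoneInvolution

variable {A : Type*} [Lattice A] {n : A → A}

theorem map_sup (hn : Antitone n) (hinv : Function.Involutive n) (x y : A) :
    n (x ⊔ y) = n x ⊓ n y := by
  refine le_antisymm (le_inf (hn le_sup_left) (hn le_sup_right)) ?_
  have hle : x ⊔ y ≤ n (n x ⊓ n y) := by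
    refine sup_le ?_ ?_
    · simpa only [hinv x] using hn (inf_le_left : n x ⊓ n y ≤ n x)
    · simpa only [hinv y] using hn (inf_le_right : n x ⊓ n y ≤ n y)
  simpa only [hinv _] using hn hle

theorem map_inf (hn : Antitone n) (hinv : Function.Involutive n) (x y : A) :
    n (x ⊓ y) = n x ⊔ n y := by
  rw [← hinv (n x ⊔ n y), map_sup hn hinv, hinv x, hinv y]

theorem orthomodular_of_sasaki_absorb (hn : Antitone n) (hinv : Function.Involutive n)
    (habs : ∀ x y : A, (x ⊔ n (x ⊔ y)) ⊓ (x ⊔ y) = x) {a b : A} (hab : a ≤ b) :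
    b = a ⊔ (b ⊓ n a) := by
  have key : (n b ⊔ a) ⊓ n a = n b := by
    simpa only [sup_eq_right.mpr (hn hab), hinv a] using habs (n b) (n a)
  calc b = n (n b) := (hinv b).symm
    _ = n ((n b ⊔ a) ⊓ n a) := by rw [key]
    _ = a ⊔ (b ⊓ n a) := by rw [map_inf hn hinv, map_sup hn hinv, hinv, hinv, sup_comm]

end AntitoneInvolution

theorem stmt_5_general {A : Type*} [Lattice A] [BoundedOrder A]
    (m r : A → A → A)
    (hant : ∀ x y : A, x ≤ y → r y ⊥ ≤ r x ⊥)
    (hdn : ∀ x : A, r (r x ⊥) ⊥ = x)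
    (hsas : ∀ x y : A, m x y = (x ⊔ r y ⊥) ⊓ y)
    (habs : ∀ x y : A, m x (x ⊔ y) = x) :
    ∀ a b : A, a ≤ b → b = a ⊔ (b ⊓ r a ⊥) := fun _ _ hab =>
  AntitoneInvolution.orthomodular_of_sasaki_absorb (fun _ _ => hant _ _) hdn
    (fun x y => hsas x (x ⊔ y) ▸ habs x y) hab

/-- In a left residuated l-groupoid (with `m` for `⊙`, `r` for `→`,
and `x' := r x ⊥`) satisfying antitony, double negation, `x ⊙ y = (x ⊔ y') ⊓ y`
and `x ⊙ (x ⊔ y) = x`, the orthomodular law holds. -/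
theorem stmt_5 {A : Type*} [Lattice A] [BoundedOrder A]
    (m r : A → A → A)
    (hu1 : ∀ x : A, m x ⊤ = x)
    (hu2 : ∀ x : A, m ⊤ x = x)
    (hadj : ∀ x y z : A, m x y ≤ z ↔ x ≤ r y z)
    (hant : ∀ x y : A, x ≤ y → r y ⊥ ≤ r x ⊥)
    (hdn : ∀ x : A, r (r x ⊥) ⊥ = x)
    (hsas : ∀ x y : A, m x y = (x ⊔ r y ⊥) ⊓ y)
    (habs : ∀ x y : A, m x (x ⊔ y) = x) :
    ∀ a b : A, a ≤ b → b = a ⊔ (b ⊓ r a ⊥) :=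
  stmt_5_general m r hant hdn hsas habs
end

section
/- Let A be a bounded lattice with binary operations ⊙ and → such that for all x, y, z in A: x ⊙ 1 = x, 1 ⊙ x = x, and x ⊙ y ≤ z if and only if x ≤ y → z (i.e., A is a left residuated l-groupoid). Define x' := x → 0, and assume that for all x, y in A: x ≤ y implies y' ≤ x' (antitony), (x')' = x (double negation law), x ⊙ y = (x ∨ y') ∧ y, and x ⊙ (x ∨ y) = x. Then for all a in A: a ∨ a' = 1. -/
/-! The negation `(a ⊔ a')'` lies below both `a'` (antitony) and `a'' = a`, hence below
`a' ⊓ a`, which vanishes because `a' ⊙ a ≤ 0` by adjointness and `a' ⊙ a = (a' ⊔ a') ⊓ a`.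
So `(a ⊔ a')' = 0`, and double negation gives `a ⊔ a' = 0' = 1`. -/

section ResiduatedNegation

variable {A : Type*} (m r : A → A → A)

theorem residual_bot_bot_eq_top [PartialOrder A] [BoundedOrder A]
    (hu2 : ∀ x : A, m ⊤ x = x) (hadj : ∀ x y z : A, m x y ≤ z ↔ x ≤ r y z) :
    r ⊥ ⊥ = ⊤ :=
  top_le_iff.mp <| (hadj _ _ _).mp (hu2 ⊥).le

theorem residual_bot_inf_self_eq_bot [Lattice A] [OrderBot A]
    (hadj : ∀ x y z : A, m x y ≤ z ↔ x ≤ r y z)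
    (hsas : ∀ x y : A, m x y = (x ⊔ r y ⊥) ⊓ y) (a : A) :
    r a ⊥ ⊓ a = ⊥ := by
  have h : m (r a ⊥) a ≤ ⊥ := (hadj _ _ _).mpr le_rfl
  rwa [hsas, sup_idem, le_bot_iff] at h

theorem residual_bot_sup_residual_bot_eq_bot [Lattice A] [OrderBot A]
    (hadj : ∀ x y z : A, m x y ≤ z ↔ x ≤ r y z)
    (hant : ∀ x y : A, x ≤ y → r y ⊥ ≤ r x ⊥)
    (hdn : ∀ x : A, r (r x ⊥) ⊥ = x)
    (hsas : ∀ x y : A, m x y = (x ⊔ r y ⊥) ⊓ y) (a : A) :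
    r (a ⊔ r a ⊥) ⊥ = ⊥ := by
  have h_le_neg : r (a ⊔ r a ⊥) ⊥ ≤ r a ⊥ := hant _ _ le_sup_left
  have h_le_self : r (a ⊔ r a ⊥) ⊥ ≤ a := by
    simpa only [hdn] using hant _ _ (le_sup_right : r a ⊥ ≤ a ⊔ r a ⊥)
  have h_le_inf : r (a ⊔ r a ⊥) ⊥ ≤ r a ⊥ ⊓ a := le_inf h_le_neg h_le_self
  rwa [residual_bot_inf_self_eq_bot m r hadj hsas a, le_bot_iff] at h_le_inf

end ResiduatedNegation

theorem stmt_6_general {A : Type*} [Lattice A] [BoundedOrder A]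
    (m r : A → A → A)
    (hu2 : ∀ x : A, m ⊤ x = x)
    (hadj : ∀ x y z : A, m x y ≤ z ↔ x ≤ r y z)
    (hant : ∀ x y : A, x ≤ y → r y ⊥ ≤ r x ⊥)
    (hdn : ∀ x : A, r (r x ⊥) ⊥ = x)
    (hsas : ∀ x y : A, m x y = (x ⊔ r y ⊥) ⊓ y) :
    ∀ a : A, a ⊔ r a ⊥ = ⊤ := by
  intro a
  calc a ⊔ r a ⊥ = r (r (a ⊔ r a ⊥) ⊥) ⊥ := (hdn _).symm
    _ = r ⊥ ⊥ := by rw [residual_bot_sup_residual_bot_eq_bot m r hadj hant hdn hsas a]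
    _ = ⊤ := residual_bot_bot_eq_top m r hu2 hadj

/-- In a left residuated l-groupoid (with `m` for `⊙`, `r` for `→`,
and `x' := r x ⊥`) satisfying antitony, double negation, `x ⊙ y = (x ⊔ y') ⊓ y`
and `x ⊙ (x ⊔ y) = x`, we have `a ⊔ a' = ⊤`. -/
theorem stmt_6 {A : Type*} [Lattice A] [BoundedOrder A]
    (m r : A → A → A)
    (hu1 : ∀ x : A, m x ⊤ = x)
    (hu2 : ∀ x : A, m ⊤ x = x)
    (hadj : ∀ x y z : A, m x y ≤ z ↔ x ≤ r y z)
    (hant : ∀ x y : A, x ≤ y → r y ⊥ ≤ r x ⊥)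
    (hdn : ∀ x : A, r (r x ⊥) ⊥ = x)
    (hsas : ∀ x y : A, m x y = (x ⊔ r y ⊥) ⊓ y)
    (habs : ∀ x y : A, m x (x ⊔ y) = x) :
    ∀ a : A, a ⊔ r a ⊥ = ⊤ :=
  stmt_6_general m r hu2 hadj hant hdn hsas
end

section
/- Let A be a bounded lattice with binary operations ⊙ and → such that for all x, y, z in A: x ⊙ 1 = x, 1 ⊙ x = x, and x ⊙ y ≤ z if and only if x ≤ y → z (i.e., A is a left residuated l-groupoid). Define x' := x → 0, and assume that for all x, y in A: x ≤ y implies y' ≤ x' (antitony), (x')' = x (double negation law), x ⊙ y = (x ∨ y') ∧ y, and x ⊙ (x ∨ y) = x. Then (A, ∨, ∧, ', 0, 1) is an orthomodular lattice; that is, for all x, y in A: x ∨ x' = 1, x ≤ y implies y' ≤ x', (x')' = x, and x ≤ y implies y = x ∨ (y ∧ x'). -/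
/-!
Writing `x' := x → ⊥`, antitony and double negation make `'` an order isomorphism onto the
order dual, hence De Morgan's laws hold and `⊥' = ⊤`. Adjointness gives `x ⊙ x' ≤ ⊥`, and by the
formula for `⊙` this is `x ⊓ x'`, so `x ⊔ x' = (x' ⊓ x)' = ⊤`. For `y' ≤ x'` the absorption law
gives `y' = y' ⊙ x' = (y' ⊔ x) ⊓ x'`, which is the orthomodular law for `x ≤ y` after negation.
-/

open OrderDual

section AntitoneInvolution

variable {A : Type*} [Lattice A] {n : A → A}

def orderIsoDualOfAntitoneInvolutive (hn : Antitone n) (hinv : Function.Involutive n) :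
    A ≃o Aᵒᵈ where
  toFun x := toDual (n x)
  invFun x := n (ofDual x)
  left_inv := hinv
  right_inv := hinv
  map_rel_iff' {a b} := ⟨fun h => hinv a ▸ hinv b ▸ hn h, fun h => hn h⟩

theorem Antitone.map_sup_of_involutive_s7 (hn : Antitone n) (hinv : Function.Involutive n)
    (a b : A) : n (a ⊔ b) = n a ⊓ n b :=
  (orderIsoDualOfAntitoneInvolutive hn hinv).map_sup a b

theorem Antitone.map_inf_of_involutive (hn : Antitone n) (hinv : Function.Involutive n)
    (a b : A) : n (a ⊓ b) = n a ⊔ n b :=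
  (orderIsoDualOfAntitoneInvolutive hn hinv).map_inf a b

theorem Antitone.map_bot_of_involutive [BoundedOrder A] (hn : Antitone n)
    (hinv : Function.Involutive n) : n ⊥ = ⊤ :=
  (orderIsoDualOfAntitoneInvolutive hn hinv).map_bot

theorem Antitone.sup_self_eq_top_of_involutive [BoundedOrder A] (hn : Antitone n)
    (hinv : Function.Involutive n) {x : A} (hx : x ⊓ n x = ⊥) : x ⊔ n x = ⊤ := by
  rw [← hinv (x ⊔ n x), hn.map_sup_of_involutive_s7 hinv, hinv, inf_comm, hx,
    hn.map_bot_of_involutive hinv]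

theorem Antitone.orthomodular_of_involutive (hn : Antitone n) (hinv : Function.Involutive n)
    (hdual : ∀ a b : A, b ≤ a → b = (b ⊔ n a) ⊓ a) {x y : A} (hxy : x ≤ y) :
    y = x ⊔ (y ⊓ n x) := by
  have h := congrArg n (hdual (n x) (n y) (hn hxy))
  rwa [hinv, hn.map_inf_of_involutive hinv, hn.map_sup_of_involutive_s7 hinv, hinv, hinv, hinv,
    sup_comm] at h

end AntitoneInvolution

theorem stmt_7_general {A : Type*} [Lattice A] [BoundedOrder A]
    (m r : A → A → A)
    (hadj : ∀ x y z : A, m x y ≤ z ↔ x ≤ r y z)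
    (hant : ∀ x y : A, x ≤ y → r y ⊥ ≤ r x ⊥)
    (hdn : ∀ x : A, r (r x ⊥) ⊥ = x)
    (hsas : ∀ x y : A, m x y = (x ⊔ r y ⊥) ⊓ y)
    (habs : ∀ x y : A, m x (x ⊔ y) = x) :
    (∀ x : A, x ⊔ r x ⊥ = ⊤) ∧
    (∀ x y : A, x ≤ y → r y ⊥ ≤ r x ⊥) ∧
    (∀ x : A, r (r x ⊥) ⊥ = x) ∧
    (∀ x y : A, x ≤ y → y = x ⊔ (y ⊓ r x ⊥)) := by
  have hn : Antitone (r · ⊥) := fun x y => hant x y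
  have hinv : Function.Involutive (r · ⊥) := hdn
  have hcompl (x : A) : x ⊓ r x ⊥ = ⊥ := by
    have h := (hadj x (r x ⊥) ⊥).mpr (hdn x).ge
    rwa [hsas, hdn, sup_idem, le_bot_iff] at h
  have hdual (a b : A) (hba : b ≤ a) : b = (b ⊔ r a ⊥) ⊓ a := by
    rw [← hsas, ← sup_eq_right.mpr hba, habs]
  exact ⟨fun x => hn.sup_self_eq_top_of_involutive hinv (hcompl x), hant, hdn,
    fun x y => hn.orthomodular_of_involutive hinv hdual⟩

/-- In a left residuated l-groupoid (with `m` for `⊙`, `r` for `→`,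
and `x' := r x ⊥`) satisfying antitony, double negation, `x ⊙ y = (x ⊔ y') ⊓ y`
and `x ⊙ (x ⊔ y) = x`, the structure `(A, ⊔, ⊓, ', ⊥, ⊤)` is an orthomodular
lattice. -/
theorem stmt_7 {A : Type*} [Lattice A] [BoundedOrder A]
    (m r : A → A → A)
    (hu1 : ∀ x : A, m x ⊤ = x)
    (hu2 : ∀ x : A, m ⊤ x = x)
    (hadj : ∀ x y z : A, m x y ≤ z ↔ x ≤ r y z)
    (hant : ∀ x y : A, x ≤ y → r y ⊥ ≤ r x ⊥)
    (hdn : ∀ x : A, r (r x ⊥) ⊥ = x)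
    (hsas : ∀ x y : A, m x y = (x ⊔ r y ⊥) ⊓ y)
    (habs : ∀ x y : A, m x (x ⊔ y) = x) :
    (∀ x : A, x ⊔ r x ⊥ = ⊤) ∧
    (∀ x y : A, x ≤ y → r y ⊥ ≤ r x ⊥) ∧
    (∀ x : A, r (r x ⊥) ⊥ = x) ∧
    (∀ x y : A, x ≤ y → y = x ⊔ (y ⊓ r x ⊥)) :=
  stmt_7_general m r hadj hant hdn hsas habs
end
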